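/- arXiv:2509.18518 — 8 statements merged into one kernel-verified Lean document; each statement's English description precedes it below -/
import Mathlib

section
/- Consider the stochastic discrete-time system with measurable safe set X ⊆ ℝⁿ. For N ∈ ℕ and x ∈ ℝⁿ define the finite-time safety value S_N(x) = P^∞({π : φ_π^{x}(k) ∈ X for all k ∈ {0,1,…,N}}). Then S_0(x) = 1_X(x) for every x ∈ ℝⁿ, and for every N ∈ ℕ and every x ∈ ℝⁿ the dynamic-programming recursion S_{N+1}(x) = 1_X(x) · ∫_Θ S_N(f(x,θ)) dP(θ) holds. -/
/-!
Under `Pinf` the first disturbance `π 0` and the shifted signal `i ↦ π (i + 1)` are independent,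
with laws `P` and `Pinf` (the shifted and the original sequence are both i.i.d. with marginal `P`,
hence both have the law `infinitePi fun _ ↦ P`). So `π ↦ (π 0, i ↦ π (i + 1))` pushes `Pinf`
forward to `P ⊗ Pinf`. A signal keeps the trajectory from `x` safe up to time `N + 1` iff `x ∈ X`
and its tail keeps the trajectory from `f x (π 0)` safe up to time `N`, and Tonelli on `P ⊗ Pinf`
gives the recursion.
-/

open MeasureTheory ProbabilityTheory

/-- Trajectory of the stochastic discrete-time system `x(l+1) = f(x(l), θ(l))`. -/
def traj {n : ℕ} {Θ : Type*} (f : (Fin n → ℝ) → Θ → (Fin n → ℝ))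
    (x₀ : Fin n → ℝ) (π : ℕ → Θ) : ℕ → (Fin n → ℝ)
  | 0 => x₀
  | k + 1 => f (traj f x₀ π k) (π k)

namespace ProbabilityTheory

variable {Ω β : Type*} {mΩ : MeasurableSpace Ω} {mβ : MeasurableSpace β} {μ : Measure Ω}
  {X : ℕ → Ω → β}

lemma iIndepFun.indepFun_head_tail (hX : ∀ i, Measurable (X i)) (h : iIndepFun X μ) :
    IndepFun (X 0) (fun ω i ↦ X (i + 1) ω) μ := by
  have h_tail : Measurable[⨆ i ∈ ({0}ᶜ : Set ℕ), mβ.comap (X i)] (fun ω i ↦ X (i + 1) ω) :=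
    (@measurable_pi_iff _ _ _ (_) _ _).2 fun i ↦ Measurable.of_comap_le <|
      le_iSup₂ (f := fun j (_ : j ∈ ({0}ᶜ : Set ℕ)) ↦ mβ.comap (X j)) (i + 1) i.succ_ne_zero
  rw [IndepFun_iff_Indep]
  refine indep_of_indep_of_le_right (indep_of_indep_of_le_left
    (indep_iSup_of_disjoint (fun i ↦ (hX i).comap_le) ((iIndepFun_iff_iIndep _ _ _).1 h)
      (disjoint_compl_right (a := ({0} : Set ℕ)))) ?_) h_tail.comap_le
  exact le_iSup₂ (f := fun j (_ : j ∈ ({0} : Set ℕ)) ↦ mβ.comap (X j)) 0 rfl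

lemma iIndepFun.map_tail_eq {P : Measure β} (hX : ∀ i, Measurable (X i))
    (h : iIndepFun X μ) (h_law : ∀ i, μ.map (X i) = P) :
    μ.map (fun ω i ↦ X (i + 1) ω) = μ.map (fun ω i ↦ X i ω) := by
  rw [(h.precomp Nat.succ_injective).map_fun_eq_infinitePi_map (fun i ↦ hX _),
    h.map_fun_eq_infinitePi_map hX]
  simp only [h_law]

lemma iIndepFun.map_head_tail_eq_prod {P : Measure β}
    (hX : ∀ i, Measurable (X i)) (h : iIndepFun X μ) (h_law : ∀ i, μ.map (X i) = P) :
    μ.map (fun ω ↦ (X 0 ω, fun i ↦ X (i + 1) ω)) = P.prod (μ.map fun ω i ↦ X i ω) := by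
  have := h.isProbabilityMeasure
  have h_tail : Measurable fun ω i ↦ X (i + 1) ω := measurable_pi_iff.2 fun i ↦ hX _
  rw [(h.indepFun_head_tail hX).map_prod_eq_prod_map_map (hX 0).aemeasurable
    h_tail.aemeasurable, h.map_tail_eq hX h_law, h_law 0]

end ProbabilityTheory

section Safety

variable {n : ℕ} {Θ : Type*} (f : (Fin n → ℝ) → Θ → (Fin n → ℝ)) (X : Set (Fin n → ℝ))

def safeSignals (N : ℕ) (x : Fin n → ℝ) : Set (ℕ → Θ) :=
  {π | ∀ k ≤ N, traj f x π k ∈ X}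

lemma traj_succ_eq_traj_tail (x : Fin n → ℝ) (π : ℕ → Θ) (k : ℕ) :
    traj f x π (k + 1) = traj f (f x (π 0)) (fun i ↦ π (i + 1)) k := by
  induction k with
  | zero => rfl
  | succ k ih => exact congrArg (f · (π (k + 1))) ih

lemma safeSignals_eq_empty {x : Fin n → ℝ} (hx : x ∉ X) (N : ℕ) :
    safeSignals (Θ := Θ) f X N x = ∅ :=
  Set.eq_empty_of_forall_notMem fun _ hπ ↦ hx (hπ 0 N.zero_le)

lemma safeSignals_succ_of_mem {x : Fin n → ℝ} (hx : x ∈ X) (N : ℕ) :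
    safeSignals (Θ := Θ) f X (N + 1) x =
      {π | (fun i ↦ π (i + 1)) ∈ safeSignals f X N (f x (π 0))} := by
  ext π
  simp only [safeSignals, Set.mem_ofPred_eq, ← traj_succ_eq_traj_tail]
  constructor
  · exact fun h k hk ↦ h (k + 1) (by omega)
  · rintro h (_ | k) hk
    exacts [hx, h k (by omega)]

variable [MeasurableSpace Θ] {f}

lemma measurable_traj (hf : Measurable fun p : (Fin n → ℝ) × Θ ↦ f p.1 p.2) (k : ℕ) :
    Measurable fun p : (Fin n → ℝ) × (ℕ → Θ) ↦ traj f p.1 p.2 k := by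
  induction k with
  | zero => exact measurable_fst
  | succ k ih => exact hf.comp (ih.prodMk ((measurable_pi_apply k).comp measurable_snd))

lemma measurableSet_safeSignals (hf : Measurable fun p : (Fin n → ℝ) × Θ ↦ f p.1 p.2)
    {X : Set (Fin n → ℝ)} (hX : MeasurableSet X) (N : ℕ) :
    MeasurableSet {p : (Fin n → ℝ) × (ℕ → Θ) | p.2 ∈ safeSignals f X N p.1} :=
  Measurable.setOf <| .forall fun k ↦ measurable_const.imp (hX.mem.comp (measurable_traj hf k))

lemma measurableSet_safeSignals_comp (hf : Measurable fun p : (Fin n → ℝ) × Θ ↦ f p.1 p.2)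
    {X : Set (Fin n → ℝ)} (hX : MeasurableSet X) (N : ℕ) (x : Fin n → ℝ) :
    MeasurableSet {q : Θ × (ℕ → Θ) | q.2 ∈ safeSignals f X N (f x q.1)} :=
  measurableSet_safeSignals hf hX N |>.preimage <|
    (hf.comp (measurable_const.prodMk measurable_fst)).prodMk measurable_snd

lemma measurable_measure_safeSignals_comp (μ : Measure (ℕ → Θ)) [SFinite μ]
    (hf : Measurable fun p : (Fin n → ℝ) × Θ ↦ f p.1 p.2)
    {X : Set (Fin n → ℝ)} (hX : MeasurableSet X) (N : ℕ) (x : Fin n → ℝ) :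
    Measurable fun θ ↦ μ (safeSignals f X N (f x θ)) :=
  measurable_measure_prodMk_left (measurableSet_safeSignals_comp hf hX N x)

lemma measure_safeSignals_succ_of_mem {P : Measure Θ} {Pinf : Measure (ℕ → Θ)}
    (h_indep : iIndepFun (fun i (π : ℕ → Θ) ↦ π i) Pinf)
    (h_law : ∀ i, Pinf.map (fun π : ℕ → Θ ↦ π i) = P)
    (hf : Measurable fun p : (Fin n → ℝ) × Θ ↦ f p.1 p.2)
    {X : Set (Fin n → ℝ)} (hX : MeasurableSet X) {x : Fin n → ℝ} (hx : x ∈ X) (N : ℕ) :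
    Pinf (safeSignals f X (N + 1) x) = ∫⁻ θ, Pinf (safeSignals f X N (f x θ)) ∂P := by
  have := h_indep.isProbabilityMeasure
  have h_split := h_indep.map_head_tail_eq_prod measurable_pi_apply h_law
  rw [Measure.map_id'] at h_split
  have hB := measurableSet_safeSignals_comp hf hX N x
  calc Pinf (safeSignals f X (N + 1) x)
      = Pinf.map (fun π ↦ (π 0, fun i ↦ π (i + 1)))
          {q : Θ × (ℕ → Θ) | q.2 ∈ safeSignals f X N (f x q.1)} := by
        rw [safeSignals_succ_of_mem f X hx, Measure.map_apply (by fun_prop) hB]; rfl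
    _ = ∫⁻ θ, Pinf (safeSignals f X N (f x θ)) ∂P := by
        rw [h_split, Measure.prod_apply hB]; rfl

end Safety

theorem finite_time_safety_dynamic_programming_general
    {n : ℕ} {Θ : Type*} [MeasurableSpace Θ]
    (P : Measure Θ)
    -- `Pinf` is the i.i.d. product measure `P^∞` on disturbance signals:
    (Pinf : Measure (ℕ → Θ)) [IsProbabilityMeasure Pinf]
    (h_indep : iIndepFun (fun i (π : ℕ → Θ) => π i) Pinf)
    (h_law : ∀ i : ℕ, Pinf.map (fun π : ℕ → Θ => π i) = P)
    (f : (Fin n → ℝ) → Θ → (Fin n → ℝ))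
    (hf : Measurable (fun p : (Fin n → ℝ) × Θ => f p.1 p.2))
    (X : Set (Fin n → ℝ)) (hX : MeasurableSet X) :
    (∀ x : Fin n → ℝ,
        (Pinf {π : ℕ → Θ | ∀ k ≤ 0, traj f x π k ∈ X}).toReal
          = X.indicator (fun _ => (1 : ℝ)) x)
      ∧ (∀ (N : ℕ) (x : Fin n → ℝ),
        (Pinf {π : ℕ → Θ | ∀ k ≤ N + 1, traj f x π k ∈ X}).toReal
          = X.indicator (fun _ => (1 : ℝ)) x
              * ∫ θ, (Pinf {π : ℕ → Θ | ∀ k ≤ N, traj f (f x θ) π k ∈ X}).toReal ∂P) := by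
  refine ⟨fun x ↦ ?_, fun N x ↦ ?_⟩
  · by_cases hx : x ∈ X <;> simp [hx, traj]
  · change (Pinf (safeSignals f X (N + 1) x)).toReal
      = _ * ∫ θ, (Pinf (safeSignals f X N (f x θ))).toReal ∂P
    by_cases hx : x ∈ X
    · rw [measure_safeSignals_succ_of_mem h_indep h_law hf hX hx, Set.indicator_of_mem hx, one_mul,
        integral_toReal (measurable_measure_safeSignals_comp Pinf hf hX N x).aemeasurable
          (.of_forall fun _ ↦ measure_lt_top _ _)]
    · simp [safeSignals_eq_empty f X hx, hx]

/-- Dynamic-programming recursion for the finite-time safety value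
`S_N(x) = P^∞({π : φ_π^x(k) ∈ X for all k ∈ {0,…,N}})`:
`S_0 = 1_X` and `S_{N+1}(x) = 1_X(x) · ∫_Θ S_N(f(x,θ)) dP(θ)`. -/
theorem finite_time_safety_dynamic_programming
    {n : ℕ} {Θ : Type*} [MeasurableSpace Θ]
    (P : Measure Θ) [IsProbabilityMeasure P]
    -- `Pinf` is the i.i.d. product measure `P^∞` on disturbance signals:
    (Pinf : Measure (ℕ → Θ)) [IsProbabilityMeasure Pinf]
    (h_indep : iIndepFun (fun i (π : ℕ → Θ) => π i) Pinf)
    (h_law : ∀ i : ℕ, Pinf.map (fun π : ℕ → Θ => π i) = P)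
    (f : (Fin n → ℝ) → Θ → (Fin n → ℝ))
    (hf : Measurable (fun p : (Fin n → ℝ) × Θ => f p.1 p.2))
    (X : Set (Fin n → ℝ)) (hX : MeasurableSet X) :
    (∀ x : Fin n → ℝ,
        (Pinf {π : ℕ → Θ | ∀ k ≤ 0, traj f x π k ∈ X}).toReal
          = X.indicator (fun _ => (1 : ℝ)) x)
      ∧ (∀ (N : ℕ) (x : Fin n → ℝ),
        (Pinf {π : ℕ → Θ | ∀ k ≤ N + 1, traj f x π k ∈ X}).toReal
          = X.indicator (fun _ => (1 : ℝ)) x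
              * ∫ θ, (Pinf {π : ℕ → Θ | ∀ k ≤ N, traj f (f x θ) π k ∈ X}).toReal ∂P) :=
  finite_time_safety_dynamic_programming_general P Pinf h_indep h_law f hf X hX
end

section
/- Consider the stochastic discrete-time system with measurable safe set X ⊆ ℝⁿ and horizon N ∈ ℕ, and let X̃ ⊆ ℝⁿ be a measurable set containing X and all one-step reachable states from X. Suppose v : ℝⁿ → ℝ is measurable, the map θ ↦ v(f(x,θ)) is P-integrable for every x ∈ X, and there are constants M ∈ ℝ and β > 0 such that: (i) v(x) ≤ M for all x ∈ X̃; (ii) β + v(x) ≤ ∫_Θ v(f(x,θ)) dP(θ) for all x ∈ X; (iii) v(x) ≤ 1 for all x ∈ X̃ ∖ X. Then for every x₀ ∈ X, the finite-time safety probability satisfies P^∞({π : φ_π^{x₀}(k) ∈ X for all k ∈ {0,1,…,N}}) ≤ (M − v(x₀)) / (β(N+1)). -/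
/-!
Put `G x = M - v x`, which is nonnegative on `X̃`. While the trajectory is in `X`, one more step
decreases `G` by at least `β` in conditional expectation, because the next disturbance is
independent of the past. Since the safe events `S_k = {x_0, …, x_{k-1} ∈ X}` shrink, induction
on `k` gives `k β P(S_k) + E[G(x_k); S_k] ≤ G x₀`, and `k = N + 1` is the claim.
-/

open MeasureTheory ProbabilityTheory

open scoped ENNReal

theorem ProbabilityTheory.IndepFun.lintegral_comp_eq_lintegral_lintegral_map
    {Ω α β : Type*} {mΩ : MeasurableSpace Ω} [MeasurableSpace α] [MeasurableSpace β]
    {μ : Measure Ω} [IsFiniteMeasure μ] {Y : Ω → α} {Z : Ω → β} (hYZ : IndepFun Y Z μ)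
    (hY : Measurable Y) (hZ : Measurable Z) {H : α × β → ℝ≥0∞} (hH : Measurable H) :
    ∫⁻ ω, H (Y ω, Z ω) ∂μ = ∫⁻ ω, ∫⁻ z, H (Y ω, z) ∂(μ.map Z) ∂μ := by
  calc ∫⁻ ω, H (Y ω, Z ω) ∂μ = ∫⁻ q, H q ∂(μ.map fun ω => (Y ω, Z ω)) :=
        (lintegral_map hH (hY.prodMk hZ)).symm
    _ = ∫⁻ q, H q ∂((μ.map Y).prod (μ.map Z)) := by
        rw [(indepFun_iff_map_prod_eq_prod_map_map hY.aemeasurable hZ.aemeasurable).mp hYZ]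
    _ = ∫⁻ y, ∫⁻ z, H (y, z) ∂(μ.map Z) ∂(μ.map Y) := lintegral_prod _ hH.aemeasurable
    _ = ∫⁻ ω, ∫⁻ z, H (Y ω, z) ∂(μ.map Z) ∂μ := lintegral_map hH.lintegral_prod_right' hY

theorem lintegral_ofReal_sub_add_ofReal_le {Θ : Type*} [MeasurableSpace Θ] {P : Measure Θ}
    [IsProbabilityMeasure P] {g : Θ → ℝ} (hg : Integrable g P) {M β c : ℝ}
    (hgM : ∀ θ, g θ ≤ M) (hβ : 0 ≤ β) (hc : β + c ≤ ∫ θ, g θ ∂P) :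
    ∫⁻ θ, ENNReal.ofReal (M - g θ) ∂P + ENNReal.ofReal β ≤ ENNReal.ofReal (M - c) := by
  have hMg : Integrable (fun θ => M - g θ) P := (integrable_const M).sub hg
  have hMg_nonneg : 0 ≤ ∫ θ, M - g θ ∂P := integral_nonneg fun θ => sub_nonneg.2 (hgM θ)
  have hMg_eq : ∫ θ, M - g θ ∂P = M - ∫ θ, g θ ∂P := by
    rw [integral_sub (integrable_const M) hg, integral_const, probReal_univ, one_smul]
  rw [← ofReal_integral_eq_lintegral_ofReal hMg (ae_of_all _ fun θ => sub_nonneg.2 (hgM θ)),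
    ← ENNReal.ofReal_add hMg_nonneg hβ]
  exact ENNReal.ofReal_le_ofReal (by linarith)

section Trajectory

variable {n : ℕ} {Θ : Type*}

def safeEvent (f : (Fin n → ℝ) → Θ → (Fin n → ℝ)) (x₀ : Fin n → ℝ) (X : Set (Fin n → ℝ))
    (k : ℕ) : Set (ℕ → Θ) :=
  {π | ∀ j < k, traj f x₀ π j ∈ X}

theorem safeEvent_antitone (f : (Fin n → ℝ) → Θ → (Fin n → ℝ)) (x₀ : Fin n → ℝ)
    (X : Set (Fin n → ℝ)) : Antitone (safeEvent f x₀ X) :=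
  fun _ _ hkl _ hπ j hj => hπ j (lt_of_lt_of_le hj hkl)

variable [mΘ : MeasurableSpace Θ]

abbrev coordsBefore (k : ℕ) : MeasurableSpace (ℕ → Θ) :=
  ⨆ i ∈ Set.Iio k, mΘ.comap fun π : ℕ → Θ => π i

theorem coordsBefore_mono : Monotone (coordsBefore (Θ := Θ)) :=
  fun _ _ hkl => biSup_mono fun _ hi => lt_of_lt_of_le hi hkl

theorem coordsBefore_le (k : ℕ) : coordsBefore (Θ := Θ) k ≤ MeasurableSpace.pi :=
  iSup₂_le fun i _ => (measurable_pi_apply i).comap_le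

theorem measurable_coordsBefore_apply {i k : ℕ} (hik : i < k) :
    Measurable[coordsBefore k] fun π : ℕ → Θ => π i :=
  Measurable.of_comap_le
    (le_iSup₂ (f := fun j (_ : j ∈ Set.Iio k) => mΘ.comap fun π : ℕ → Θ => π j) i hik)

variable {f : (Fin n → ℝ) → Θ → (Fin n → ℝ)} {x₀ : Fin n → ℝ}

theorem measurable_traj_coordsBefore (hf : Measurable fun p : (Fin n → ℝ) × Θ => f p.1 p.2)
    (k : ℕ) : Measurable[coordsBefore k] fun π => traj f x₀ π k := by
  induction k with
  | zero => exact measurable_const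
  | succ k ih =>
    exact hf.comp ((ih.mono (coordsBefore_mono k.le_succ) le_rfl).prodMk
      (measurable_coordsBefore_apply k.lt_succ_self))

theorem measurableSet_coordsBefore_safeEvent_succ
    (hf : Measurable fun p : (Fin n → ℝ) × Θ => f p.1 p.2) {X : Set (Fin n → ℝ)}
    (hX : MeasurableSet X) (k : ℕ) :
    MeasurableSet[coordsBefore k] (safeEvent f x₀ X (k + 1)) := by
  have : safeEvent f x₀ X (k + 1) = ⋂ j ∈ Finset.range (k + 1), (traj f x₀ · j) ⁻¹' X := by
    ext π; simp [safeEvent]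
  rw [this]
  refine Finset.measurableSet_biInter _ fun j hj => ?_
  exact (measurable_traj_coordsBefore hf j).mono
    (coordsBefore_mono (Nat.lt_succ_iff.1 (Finset.mem_range.1 hj))) le_rfl hX

variable {P : Measure Θ} {Pinf : Measure (ℕ → Θ)} [IsProbabilityMeasure Pinf]

theorem lintegral_comp_apply_eq_lintegral_lintegral {α : Type*} [MeasurableSpace α]
    (h_indep : iIndepFun (m := fun _ : ℕ => mΘ) (fun i (π : ℕ → Θ) => π i) Pinf) {k : ℕ}
    (h_law : Pinf.map (fun π : ℕ → Θ => π k) = P) {Y : (ℕ → Θ) → α}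
    (hY : Measurable[coordsBefore k] Y) {H : α × Θ → ℝ≥0∞} (hH : Measurable H) :
    ∫⁻ π, H (Y π, π k) ∂Pinf = ∫⁻ π, ∫⁻ θ, H (Y π, θ) ∂P ∂Pinf := by
  have h_past_future :
      Indep (coordsBefore k) (⨆ i ∈ ({k} : Set ℕ), mΘ.comap fun π : ℕ → Θ => π i) Pinf :=
    indep_iSup_of_disjoint (fun i => (measurable_pi_apply i).comap_le) h_indep.iIndep
      (Set.disjoint_singleton_right.2 (lt_irrefl k))
  have hYZ : IndepFun Y (fun π => π k) Pinf := by
    rw [IndepFun_iff_Indep]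
    refine indep_of_indep_of_le_right (indep_of_indep_of_le_left h_past_future hY.comap_le) ?_
    exact le_iSup₂ (f := fun j (_ : j ∈ ({k} : Set ℕ)) => mΘ.comap fun π : ℕ → Θ => π j) k rfl
  rw [hYZ.lintegral_comp_eq_lintegral_lintegral_map (hY.mono (coordsBefore_le k) le_rfl)
    (measurable_pi_apply k) hH, h_law]

variable {X : Set (Fin n → ℝ)} {G : (Fin n → ℝ) → ℝ≥0∞} {c : ℝ≥0∞}

theorem setLIntegral_safeEvent_succ_add_le
    (h_indep : iIndepFun (m := fun _ : ℕ => mΘ) (fun i (π : ℕ → Θ) => π i) Pinf) {k : ℕ}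
    (h_law : Pinf.map (fun π : ℕ → Θ => π k) = P)
    (hf : Measurable fun p : (Fin n → ℝ) × Θ => f p.1 p.2) (hX : MeasurableSet X)
    (hG : Measurable G) (hGX : ∀ x ∈ X, ∫⁻ θ, G (f x θ) ∂P + c ≤ G x) :
    ∫⁻ π in safeEvent f x₀ X (k + 1), G (traj f x₀ π (k + 1)) ∂Pinf
        + c * Pinf (safeEvent f x₀ X (k + 1))
      ≤ ∫⁻ π in safeEvent f x₀ X k, G (traj f x₀ π k) ∂Pinf := by
  set S := safeEvent f x₀ X (k + 1)
  have hS_past : MeasurableSet[coordsBefore k] S :=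
    measurableSet_coordsBefore_safeEvent_succ hf hX k
  have hS : MeasurableSet S := coordsBefore_le k _ hS_past
  have h_traj : Measurable fun π => traj f x₀ π k :=
    (measurable_traj_coordsBefore hf k).mono (coordsBefore_le k) le_rfl
  have h_cond : ∫⁻ π in S, G (traj f x₀ π (k + 1)) ∂Pinf
      = ∫⁻ π in S, ∫⁻ θ, G (f (traj f x₀ π k) θ) ∂P ∂Pinf := by
    -- `1_S` travels inside `Y`: like `x_k`, it depends only on `θ₀, …, θ_{k-1}`.
    have h_indep_step := lintegral_comp_apply_eq_lintegral_lintegral h_indep h_law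
      (Y := fun π => (S.indicator (fun _ => 1) π, traj f x₀ π k))
      ((Measurable.indicator (m := coordsBefore k) measurable_const hS_past).prodMk
        (measurable_traj_coordsBefore hf k))
      (H := fun q : (ℝ≥0∞ × (Fin n → ℝ)) × Θ => q.1.1 * G (f q.1.2 q.2)) (by fun_prop)
    rw [← lintegral_indicator hS, ← lintegral_indicator hS]
    calc ∫⁻ π, S.indicator (fun π => G (traj f x₀ π (k + 1))) π ∂Pinf
        = ∫⁻ π, S.indicator (fun _ => 1) π * G (f (traj f x₀ π k) (π k)) ∂Pinf :=
          lintegral_congr fun π => by by_cases hπ : π ∈ S <;> simp [hπ, traj]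
      _ = ∫⁻ π, ∫⁻ θ, S.indicator (fun _ => 1) π * G (f (traj f x₀ π k) θ) ∂P ∂Pinf :=
          h_indep_step
      _ = ∫⁻ π, S.indicator (fun π => ∫⁻ θ, G (f (traj f x₀ π k) θ) ∂P) π ∂Pinf :=
          lintegral_congr fun π => by by_cases hπ : π ∈ S <;> simp [hπ]
  calc ∫⁻ π in S, G (traj f x₀ π (k + 1)) ∂Pinf + c * Pinf S
      = ∫⁻ π in S, (∫⁻ θ, G (f (traj f x₀ π k) θ) ∂P + c) ∂Pinf := by
        rw [h_cond, lintegral_add_right _ measurable_const, setLIntegral_const]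
    _ ≤ ∫⁻ π in S, G (traj f x₀ π k) ∂Pinf :=
        setLIntegral_mono (hG.comp h_traj) fun π hπ => hGX _ (hπ k k.lt_succ_self)
    _ ≤ ∫⁻ π in safeEvent f x₀ X k, G (traj f x₀ π k) ∂Pinf :=
        lintegral_mono_set (safeEvent_antitone f x₀ X k.le_succ)

theorem natCast_mul_mul_measure_safeEvent_add_le
    (h_indep : iIndepFun (m := fun _ : ℕ => mΘ) (fun i (π : ℕ → Θ) => π i) Pinf)
    (h_law : ∀ i : ℕ, Pinf.map (fun π : ℕ → Θ => π i) = P)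
    (hf : Measurable fun p : (Fin n → ℝ) × Θ => f p.1 p.2) (hX : MeasurableSet X)
    (hG : Measurable G) (hGX : ∀ x ∈ X, ∫⁻ θ, G (f x θ) ∂P + c ≤ G x) (k : ℕ) :
    k * c * Pinf (safeEvent f x₀ X k) + ∫⁻ π in safeEvent f x₀ X k, G (traj f x₀ π k) ∂Pinf
      ≤ G x₀ := by
  induction k with
  | zero => simp [safeEvent, traj]
  | succ k ih =>
    calc ((k + 1 : ℕ) : ℝ≥0∞) * c * Pinf (safeEvent f x₀ X (k + 1))
          + ∫⁻ π in safeEvent f x₀ X (k + 1), G (traj f x₀ π (k + 1)) ∂Pinf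
        = k * c * Pinf (safeEvent f x₀ X (k + 1))
          + (∫⁻ π in safeEvent f x₀ X (k + 1), G (traj f x₀ π (k + 1)) ∂Pinf
            + c * Pinf (safeEvent f x₀ X (k + 1))) := by
          push_cast; ring
      _ ≤ k * c * Pinf (safeEvent f x₀ X k)
          + ∫⁻ π in safeEvent f x₀ X k, G (traj f x₀ π k) ∂Pinf := by
          gcongr ?_ + ?_
          · exact mul_le_mul_right (measure_mono (safeEvent_antitone f x₀ X k.le_succ)) _
          · exact setLIntegral_safeEvent_succ_add_le h_indep (h_law k) hf hX hG hGX
      _ ≤ G x₀ := ih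

end Trajectory

theorem finite_time_safety_upper_bound_bounded_fn_martingale_general
    {n : ℕ} {Θ : Type*} [MeasurableSpace Θ]
    (P : Measure Θ) [IsProbabilityMeasure P]
    -- `Pinf` is the i.i.d. product measure `P^∞` on disturbance signals:
    (Pinf : Measure (ℕ → Θ)) [IsProbabilityMeasure Pinf]
    (h_indep : iIndepFun (m := fun _ : ℕ => ‹MeasurableSpace Θ›) (fun i (π : ℕ → Θ) => π i) Pinf)
    (h_law : ∀ i : ℕ, Pinf.map (fun π : ℕ → Θ => π i) = P)
    (f : (Fin n → ℝ) → Θ → (Fin n → ℝ))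
    (hf : Measurable (fun p : (Fin n → ℝ) × Θ => f p.1 p.2))
    (X Xt : Set (Fin n → ℝ)) (hX : MeasurableSet X)
    (hXsub : X ⊆ Xt)
    (hreach : ∀ x ∈ X, ∀ θ : Θ, f x θ ∈ Xt)
    (N : ℕ)
    (v : (Fin n → ℝ) → ℝ) (hv : Measurable v)
    (hint : ∀ x ∈ X, Integrable (fun θ => v (f x θ)) P)
    (M β : ℝ) (hβ : 0 < β)
    (h1 : ∀ x ∈ Xt, v x ≤ M)
    (h2 : ∀ x ∈ X, β + v x ≤ ∫ θ, v (f x θ) ∂P)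
    (x₀ : Fin n → ℝ) (hx₀ : x₀ ∈ X) :
    (Pinf {π : ℕ → Θ | ∀ k ≤ N, traj f x₀ π k ∈ X}).toReal
      ≤ (M - v x₀) / (β * (N + 1)) := by
  have h_safe : {π : ℕ → Θ | ∀ k ≤ N, traj f x₀ π k ∈ X} = safeEvent f x₀ X (N + 1) := by
    ext π; simp [safeEvent]
  have hGX : ∀ x ∈ X, ∫⁻ θ, ENNReal.ofReal (M - v (f x θ)) ∂P + ENNReal.ofReal β
      ≤ ENNReal.ofReal (M - v x) := fun x hx =>
    lintegral_ofReal_sub_add_ofReal_le (hint x hx) (fun θ => h1 _ (hreach x hx θ)) hβ.le (h2 x hx)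
  have h_bound := le_self_add.trans (natCast_mul_mul_measure_safeEvent_add_le h_indep h_law hf hX
    (G := fun x => ENNReal.ofReal (M - v x)) (by fun_prop) hGX (x₀ := x₀) (N + 1))
  have h_real := ENNReal.toReal_mono ENNReal.ofReal_ne_top h_bound
  rw [ENNReal.toReal_mul, ENNReal.toReal_mul, ENNReal.toReal_natCast, ENNReal.toReal_ofReal hβ.le,
    ENNReal.toReal_ofReal (sub_nonneg.2 (h1 x₀ (hXsub hx₀)))] at h_real
  rw [h_safe, le_div_iff₀ (by positivity)]
  push_cast at h_real
  linarith

/-- Barrier-like condition with a bounded auxiliary function (Theorem 2 of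
Xue et al. 2024, case `α = 1`): upper bound on the finite-time safety probability. -/
theorem finite_time_safety_upper_bound_bounded_fn_martingale
    {n : ℕ} {Θ : Type*} [MeasurableSpace Θ]
    (P : Measure Θ) [IsProbabilityMeasure P]
    -- `Pinf` is the i.i.d. product measure `P^∞` on disturbance signals:
    (Pinf : Measure (ℕ → Θ)) [IsProbabilityMeasure Pinf]
    (h_indep : iIndepFun (m := fun _ : ℕ => ‹MeasurableSpace Θ›) (fun i (π : ℕ → Θ) => π i) Pinf)
    (h_law : ∀ i : ℕ, Pinf.map (fun π : ℕ → Θ => π i) = P)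
    (f : (Fin n → ℝ) → Θ → (Fin n → ℝ))
    (hf : Measurable (fun p : (Fin n → ℝ) × Θ => f p.1 p.2))
    (X Xt : Set (Fin n → ℝ)) (hX : MeasurableSet X) (hXt : MeasurableSet Xt)
    (hXsub : X ⊆ Xt)
    (hreach : ∀ x ∈ X, ∀ θ : Θ, f x θ ∈ Xt)
    (N : ℕ)
    (v : (Fin n → ℝ) → ℝ) (hv : Measurable v)
    (hint : ∀ x ∈ X, Integrable (fun θ => v (f x θ)) P)
    (M β : ℝ) (hβ : 0 < β)
    (h1 : ∀ x ∈ Xt, v x ≤ M)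
    (h2 : ∀ x ∈ X, β + v x ≤ ∫ θ, v (f x θ) ∂P)
    (h3 : ∀ x ∈ Xt \ X, v x ≤ 1)
    (x₀ : Fin n → ℝ) (hx₀ : x₀ ∈ X) :
    (Pinf {π : ℕ → Θ | ∀ k ≤ N, traj f x₀ π k ∈ X}).toReal
      ≤ (M - v x₀) / (β * (N + 1)) :=
  finite_time_safety_upper_bound_bounded_fn_martingale_general P Pinf h_indep h_law f hf X Xt hX
    hXsub hreach N v hv hint M β hβ h1 h2 x₀ hx₀
end

section
/- Let T > 0, α > 0 and β ∈ ℝ with α + β > 0. Let m : [0,T] → ℝ be continuous with m(t) ≤ 1 for all t ∈ [0,T], and let h : [0,T] → ℝ be monotone nondecreasing with 0 ≤ h(t) ≤ 1 for all t ∈ [0,T]. Assume that for every t ∈ [0,T], m(t) ≥ m(0) + ∫₀^t (α·m(s) + β − (α+β)·h(s)) ds. Then h(T) ≥ (e^{αT}(α·m(0) + β) − (α+β)) / ((α+β)(e^{αT} − 1)). -/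
/-!
Freezing `h` at its largest value `h T` turns the hypothesis into the linear integral inequality
`m t ≥ m 0 + ∫₀ᵗ (α m + K)` with `K = β - (α + β) h T`. Its right-hand side `u` satisfies
`u' = α m + K ≥ α u + K`, so Grönwall's inequality applied to `-u` gives
`m T ≥ m 0 e^{αT} + (K / α) (e^{αT} - 1)`; together with `m T ≤ 1` this rearranges to the bound.
-/

open MeasureTheory Set Filter Topology

theorem hasDerivWithinAt_Ici_integral_of_continuousOn {E : Type*} [NormedAddCommGroup E]
    [NormedSpace ℝ E] [CompleteSpace E] {f : ℝ → E} {a b x : ℝ}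
    (hf : ContinuousOn f (Icc a b)) (hx : x ∈ Ico a b) :
    HasDerivWithinAt (fun u => ∫ s in a..u, f s) (f x) (Ici x) x := by
  have hmem : Icc a b ∈ 𝓝[>] x := Icc_mem_nhdsGT_of_mem hx
  refine intervalIntegral.integral_hasDerivWithinAt_right
    ((hf.mono (Icc_subset_Icc_right hx.2.le)).intervalIntegrable_of_Icc hx.1) ?_ ?_
  · exact (hf.stronglyMeasurableAtFilter_nhdsWithin measurableSet_Icc x).filter_mono
      (nhdsWithin_le_of_mem hmem)
  · exact (hf x (Ico_subset_Icc_self hx)).mono_of_mem_nhdsWithin hmem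

theorem continuousOn_integral_of_continuousOn {E : Type*} [NormedAddCommGroup E]
    [NormedSpace ℝ E] [CompleteSpace E] {f : ℝ → E} {a b : ℝ}
    (hf : ContinuousOn f (Icc a b)) :
    ContinuousOn (fun u => ∫ s in a..u, f s) (Icc a b) :=
  (intervalIntegral.continuousOn_primitive hf.integrableOn_Icc).congr fun _ hx =>
    intervalIntegral.integral_of_le hx.1

theorem gronwallBound_neg (δ K ε x : ℝ) :
    gronwallBound (-δ) K (-ε) x = -gronwallBound δ K ε x := by
  rcases eq_or_ne K 0 with rfl | hK
  · simp only [gronwallBound_K0]; ring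
  · simp only [gronwallBound_of_K_ne_0 hK]; ring

theorem gronwallBound_le_of_le_add_integral {m : ℝ → ℝ} {a b c α K : ℝ} (hα : 0 ≤ α)
    (hm : ContinuousOn m (Icc a b))
    (hineq : ∀ t ∈ Icc a b, c + ∫ s in a..t, (α * m s + K) ≤ m t) :
    ∀ t ∈ Icc a b, gronwallBound c α K (t - a) ≤ m t := by
  set u : ℝ → ℝ := fun t => c + ∫ s in a..t, (α * m s + K)
  have hf : ContinuousOn (fun s => α * m s + K) (Icc a b) := by fun_prop
  have hderiv : ∀ t ∈ Ico a b, HasDerivWithinAt (-u) (-(α * m t + K)) (Ici t) t := fun t ht =>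
    ((hasDerivWithinAt_Ici_integral_of_continuousOn hf ht).const_add c).neg
  have hu_le : ∀ t ∈ Icc a b, -u t ≤ gronwallBound (-c) α (-K) (t - a) :=
    le_gronwallBound_of_liminf_deriv_right_le
      (continuousOn_const.add (continuousOn_integral_of_continuousOn hf)).neg
      (fun t ht _ hr => (hderiv t ht).liminf_right_slope_le hr) (by simp [u])
      fun t ht => by
        have := mul_le_mul_of_nonneg_left (hineq t (Ico_subset_Icc_self ht)) hα
        linarith
  intro t ht
  have := hu_le t ht
  rw [gronwallBound_neg, neg_le_neg_iff] at this
  exact this.trans (hineq t ht)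

theorem reach_avoid_lower_bound_core_pos_general
    (T α β : ℝ) (hT : 0 < T) (hα : 0 < α) (hαβ : 0 < α + β)
    (m h : ℝ → ℝ)
    (hm : ContinuousOn m (Icc 0 T))
    (hm1 : ∀ t ∈ Icc 0 T, m t ≤ 1)
    (hmono : MonotoneOn h (Icc 0 T))
    (hineq : ∀ t ∈ Icc 0 T,
      m 0 + ∫ s in (0 : ℝ)..t, (α * m s + β - (α + β) * h s) ≤ m t) :
    (Real.exp (α * T) * (α * m 0 + β) - (α + β))
        / ((α + β) * (Real.exp (α * T) - 1)) ≤ h T := by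
  have hTmem : T ∈ Icc 0 T := ⟨hT.le, le_rfl⟩
  have hfrozen : ∀ t ∈ Icc 0 T,
      m 0 + ∫ s in (0 : ℝ)..t, (α * m s + (β - (α + β) * h T)) ≤ m t := by
    intro t ht
    have hsub : Icc 0 t ⊆ Icc 0 T := Icc_subset_Icc_right ht.2
    have hm_int : IntervalIntegrable m volume 0 t := (hm.mono hsub).intervalIntegrable_of_Icc ht.1
    have hh_int : IntervalIntegrable h volume 0 t :=
      (hmono.mono (uIcc_of_le ht.1 ▸ hsub)).intervalIntegrable
    refine le_trans (add_le_add le_rfl (intervalIntegral.integral_mono_on ht.1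
      ((hm_int.const_mul α).add intervalIntegrable_const)
      (((hm_int.const_mul α).add intervalIntegrable_const).sub (hh_int.const_mul _))
      fun s hs => ?_)) (hineq t ht)
    have := mul_le_mul_of_nonneg_left (hmono (hsub hs) hTmem (hs.2.trans ht.2)) hαβ.le
    linarith
  have hbound := (gronwallBound_le_of_le_add_integral hα.le hm hfrozen T hTmem).trans (hm1 T hTmem)
  rw [sub_zero, gronwallBound_of_K_ne_0 hα.ne'] at hbound
  have hE : 1 < Real.exp (α * T) := Real.one_lt_exp_iff.2 (mul_pos hα hT)
  rw [div_le_iff₀ (mul_pos hαβ (sub_pos.2 hE))]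
  beta_reduce at hbound
  have hK : α * ((β - (α + β) * h T) / α) = β - (α + β) * h T := mul_div_cancel₀ _ hα.ne'
  nlinarith [mul_le_mul_of_nonneg_left hbound hα.le]

/-- Analytic core of Theorem 2 (case `α > 0`): an integral inequality for the
expectation `m` of the barrier function along the stopped process and the
nondecreasing target-hitting probability `h` yields the lower bound on `h(T)`. -/
theorem reach_avoid_lower_bound_core_pos
    (T α β : ℝ) (hT : 0 < T) (hα : 0 < α) (hαβ : 0 < α + β)
    (m h : ℝ → ℝ)
    (hm : ContinuousOn m (Icc 0 T))
    (hm1 : ∀ t ∈ Icc 0 T, m t ≤ 1)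
    (hmono : MonotoneOn h (Icc 0 T))
    (hh0 : ∀ t ∈ Icc 0 T, 0 ≤ h t)
    (hh1 : ∀ t ∈ Icc 0 T, h t ≤ 1)
    (hineq : ∀ t ∈ Icc 0 T,
      m 0 + ∫ s in (0 : ℝ)..t, (α * m s + β - (α + β) * h s) ≤ m t) :
    (Real.exp (α * T) * (α * m 0 + β) - (α + β))
        / ((α + β) * (Real.exp (α * T) - 1)) ≤ h T :=
  reach_avoid_lower_bound_core_pos_general T α β hT hα hαβ m h hm hm1 hmono hineq
end

section
/- Let T > 0 and β > 0. Let m : [0,T] → ℝ be continuous with m(t) ≤ 1 for all t ∈ [0,T], and let h : [0,T] → ℝ be monotone nondecreasing with 0 ≤ h(t) ≤ 1 for all t ∈ [0,T]. Assume that for every t ∈ [0,T], m(t) ≥ m(0) + ∫₀^t β·(1 − h(s)) ds. Then h(T) ≥ (m(0) − 1)/(βT) + 1. -/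
open MeasureTheory Set

/-- Analytic core of Theorem 2 (case `α = 0`): an integral inequality for the
expectation `m` of the barrier function along the stopped process and the
nondecreasing target-hitting probability `h` yields the lower bound on `h(T)`. -/
theorem reach_avoid_lower_bound_core_zero
    (T β : ℝ) (hT : 0 < T) (hβ : 0 < β)
    (m h : ℝ → ℝ)
    (hm : ContinuousOn m (Icc 0 T))
    (hm1 : ∀ t ∈ Icc 0 T, m t ≤ 1)
    (hmono : MonotoneOn h (Icc 0 T))
    (hh0 : ∀ t ∈ Icc 0 T, 0 ≤ h t)
    (hh1 : ∀ t ∈ Icc 0 T, h t ≤ 1)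
    (hineq : ∀ t ∈ Icc 0 T,
      m 0 + ∫ s in (0 : ℝ)..t, β * (1 - h s) ≤ m t) :
    (m 0 - 1) / (β * T) + 1 ≤ h T := by
  have hTmem : T ∈ Icc (0:ℝ) T := ⟨le_of_lt hT, le_refl T⟩
  have huIcc : uIcc (0:ℝ) T = Icc 0 T := uIcc_of_le hT.le
  have hint : IntervalIntegrable (fun s => β * (1 - h s)) volume 0 T := by
    have : MonotoneOn (fun s => β * (1 - h s)) (uIcc 0 T) → True := fun _ => trivial
    have hanti : AntitoneOn (fun s => β * (1 - h s)) (uIcc 0 T) := by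
      rw [huIcc]
      intro a ha b hb hab
      have := hmono ha hb hab
      dsimp only
      nlinarith
    exact hanti.intervalIntegrable
  have hconst : IntervalIntegrable (fun _ : ℝ => β * (1 - h T)) volume 0 T :=
    intervalIntegrable_const
  have hle : ∫ s in (0:ℝ)..T, β * (1 - h T) ≤ ∫ s in (0:ℝ)..T, β * (1 - h s) := by
    apply intervalIntegral.integral_mono_on hT.le hconst hint
    intro s hs
    have := hmono hs hTmem hs.2
    nlinarith
  have hconstval : ∫ s in (0:ℝ)..T, β * (1 - h T) = β * (1 - h T) * T := by
    simp; ring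
  have hkey : m 0 + β * (1 - h T) * T ≤ 1 := by
    have h1 := hineq T hTmem
    have h2 := hm1 T hTmem
    rw [hconstval] at hle
    linarith
  rw [div_add' _ _ _ (by positivity), div_le_iff₀ (by positivity)]
  nlinarith
end

section
/- Let T > 0, α > 0 and β ∈ ℝ with α + β > 0, and let c ∈ ℝ. Let h : [0,T] → ℝ be monotone nondecreasing with 0 ≤ h(t) ≤ 1 for all t ∈ [0,T], and define ν : [0,T] → ℝ by ν(s) = c − β·s + (α+β)·∫₀^s h(t) dt. Then ν(T) + ∫₀^T ν(s)·α·e^{α(T−s)} ds ≤ c·e^{αT} + (β/α)·(1 − e^{αT}) + (α+β)·h(T)·(e^{αT} − 1)/α. -/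
open MeasureTheory Set

/-!
Since `h` is nondecreasing, `∫₀^s h ≤ s · h(T)`, so `ν` is dominated on `[0, T]` by the affine
function `s ↦ c + k s` with `k = (α + β) h(T) − β` (this uses `α + β ≥ 0`). The functional
`f ↦ f(T) + ∫₀^T f(s) α e^{α(T−s)} ds` is monotone because `α ≥ 0`, and on affine functions it
evaluates in closed form to `c e^{αT} + k (e^{αT} − 1) / α`, which is the claimed bound.
-/

/-- The right-hand side of the integral form of Grönwall's inequality with rate `α` on `[0, T]`. -/
noncomputable def gronwallIntegralBound (α T : ℝ) (f : ℝ → ℝ) : ℝ :=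
  f T + ∫ s in (0 : ℝ)..T, f s * α * Real.exp (α * (T - s))

theorem MonotoneOn.intervalIntegral_le_sub_mul {f : ℝ → ℝ} {a b : ℝ} (hab : a ≤ b)
    (hf : MonotoneOn f (Icc a b)) : ∫ x in a..b, f x ≤ (b - a) * f b := by
  have hb : b ∈ Icc a b := ⟨hab, le_rfl⟩
  calc ∫ x in a..b, f x ≤ ∫ _ in a..b, f b :=
        intervalIntegral.integral_mono_on hab
          (uIcc_of_le hab ▸ hf).intervalIntegrable
          intervalIntegrable_const fun x hx => hf hx hb hx.2
    _ = (b - a) * f b := by simp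

theorem MonotoneOn.continuousOn_primitive {f : ℝ → ℝ} {a b : ℝ} (hab : a ≤ b)
    (hf : MonotoneOn f (Icc a b)) : ContinuousOn (fun x => ∫ t in a..x, f t) (Icc a b) := by
  simpa [uIcc_of_le hab] using
    intervalIntegral.continuousOn_primitive_interval (μ := volume) (a := a) (b := b)
      (f := f) (by simpa [uIcc_of_le hab] using hf.integrableOn_isCompact isCompact_Icc)

theorem gronwallIntegralBound_mono {α T : ℝ} {f g : ℝ → ℝ} (hα : 0 ≤ α) (hT : 0 ≤ T)
    (hf : ContinuousOn f (Icc 0 T)) (hg : ContinuousOn g (Icc 0 T))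
    (hfg : ∀ s ∈ Icc 0 T, f s ≤ g s) :
    gronwallIntegralBound α T f ≤ gronwallIntegralBound α T g := by
  have hint : ∀ u : ℝ → ℝ, ContinuousOn u (Icc 0 T) →
      IntervalIntegrable (fun s => u s * α * Real.exp (α * (T - s))) volume 0 T := by
    intro u hu
    refine ContinuousOn.intervalIntegrable ?_
    rw [uIcc_of_le hT]
    exact (hu.mul continuousOn_const).mul (by fun_prop)
  refine add_le_add (hfg T ⟨hT, le_rfl⟩) <|
    intervalIntegral.integral_mono_on hT (hint f hf) (hint g hg) fun s hs => ?_
  simpa only [mul_assoc] using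
    mul_le_mul_of_nonneg_right (hfg s hs) (by positivity : 0 ≤ α * Real.exp (α * (T - s)))

theorem gronwallIntegralBound_affine {α : ℝ} (hα : α ≠ 0) (T c k : ℝ) :
    gronwallIntegralBound α T (fun s => c + k * s)
      = c * Real.exp (α * T) + k / α * (Real.exp (α * T) - 1) := by
  have hderiv : ∀ s : ℝ, HasDerivAt (fun s => -(c + k * s + k / α) * Real.exp (α * (T - s)))
      ((c + k * s) * α * Real.exp (α * (T - s))) s := by
    intro s
    have hexp : HasDerivAt (fun s => Real.exp (α * (T - s)))
        (Real.exp (α * (T - s)) * (α * (0 - 1))) s :=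
      (((hasDerivAt_const s T).sub (hasDerivAt_id s)).const_mul α).exp
    have hlin : HasDerivAt (fun s => -(c + k * s + k / α)) (-(k * 1)) s :=
      ((((hasDerivAt_id s).const_mul k).const_add c).add_const _).neg
    refine (hlin.mul hexp).congr_deriv ?_
    field_simp
    ring
  rw [gronwallIntegralBound, intervalIntegral.integral_eq_sub_of_hasDerivAt (fun s _ => hderiv s)
    (by apply Continuous.intervalIntegrable; fun_prop)]
  simp only [sub_self, sub_zero, mul_zero, Real.exp_zero, mul_one]
  ring

theorem gronwall_step_estimate_general
    (T α β c : ℝ) (hT : 0 < T) (hα : 0 < α) (hαβ : 0 < α + β)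
    (h : ℝ → ℝ)
    (hmono : MonotoneOn h (Icc 0 T))
    (ν : ℝ → ℝ)
    (hν : ∀ s ∈ Icc 0 T, ν s = c - β * s + (α + β) * ∫ t in (0 : ℝ)..s, h t) :
    ν T + ∫ s in (0 : ℝ)..T, ν s * α * Real.exp (α * (T - s))
      ≤ c * Real.exp (α * T) + (β / α) * (1 - Real.exp (α * T))
          + (α + β) * h T * (Real.exp (α * T) - 1) / α := by
  set k := (α + β) * h T - β
  have hν_le : ∀ s ∈ Icc 0 T, ν s ≤ c + k * s := by
    intro s hs
    have hprim : ∫ t in (0 : ℝ)..s, h t ≤ s * h T :=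
      calc ∫ t in (0 : ℝ)..s, h t ≤ (s - 0) * h s :=
            (hmono.mono (Icc_subset_Icc le_rfl hs.2)).intervalIntegral_le_sub_mul hs.1
        _ ≤ s * h T := by
            rw [sub_zero]
            exact mul_le_mul_of_nonneg_left (hmono hs ⟨hT.le, le_rfl⟩ hs.2) hs.1
    rw [hν s hs]
    linarith [mul_le_mul_of_nonneg_left hprim hαβ.le]
  have hν_cont : ContinuousOn ν (Icc 0 T) :=
    ((continuousOn_const.sub (continuousOn_const.mul continuousOn_id)).add
      (continuousOn_const.mul (hmono.continuousOn_primitive hT.le))).congr hν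
  calc ν T + ∫ s in (0 : ℝ)..T, ν s * α * Real.exp (α * (T - s))
      ≤ gronwallIntegralBound α T (fun s => c + k * s) :=
        gronwallIntegralBound_mono hα.le hT.le hν_cont (by fun_prop) hν_le
    _ = c * Real.exp (α * T) + k / α * (Real.exp (α * T) - 1) :=
        gronwallIntegralBound_affine hα.ne' T c k
    _ = _ := by field_simp; ring

/-- Key estimate in the Grönwall step of the proof of Theorem 2: explicit bound on
`ν(T) + ∫₀^T ν(s)·α·e^{α(T−s)} ds` where `ν(s) = c − β·s + (α+β)·∫₀^s h(t) dt`. -/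
theorem gronwall_step_estimate
    (T α β c : ℝ) (hT : 0 < T) (hα : 0 < α) (hαβ : 0 < α + β)
    (h : ℝ → ℝ)
    (hmono : MonotoneOn h (Icc 0 T))
    (hh0 : ∀ t ∈ Icc 0 T, 0 ≤ h t)
    (hh1 : ∀ t ∈ Icc 0 T, h t ≤ 1)
    (ν : ℝ → ℝ)
    (hν : ∀ s ∈ Icc 0 T, ν s = c - β * s + (α + β) * ∫ t in (0 : ℝ)..s, h t) :
    ν T + ∫ s in (0 : ℝ)..T, ν s * α * Real.exp (α * (T - s))
      ≤ c * Real.exp (α * T) + (β / α) * (1 - Real.exp (α * T))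
          + (α + β) * h T * (Real.exp (α * T) - 1) / α :=
  gronwall_step_estimate_general T α β c hT hα hαβ h hmono ν hν
end

section
/- Let T > 0, M ≥ 0, α ≠ 0 and β ∈ ℝ. Let m : [0,T] → ℝ be continuous with m(t) ≥ e^{αt}·m(0) + (β/α)·(e^{αt} − 1) for all t ∈ [0,T], and let w : [0,T] → ℝ be continuously differentiable with |w(t)| ≤ M for all t ∈ [0,T] and m(t) ≤ w′(t) for all t ∈ [0,T]. Then ((m(0)/α + β/α²)·(e^{αT} − 1) − (β/α)·T)/T − 2M/T ≤ 0. -/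
open MeasureTheory Set

theorem exp_mul_integral (α T : ℝ) (hα : α ≠ 0) :
    ∫ t in (0:ℝ)..T, Real.exp (α * t) = (Real.exp (α * T) - 1) / α := by
  have h : ∀ t ∈ Set.uIcc (0:ℝ) T,
      HasDerivAt (fun s => Real.exp (α * s) / α) (Real.exp (α * t)) t := by
    intro t _
    have := (Real.hasDerivAt_exp (α * t)).comp t ((hasDerivAt_id t).const_mul α)
    simpa [mul_comm, mul_div_assoc, mul_div_cancel_left₀ _ hα] using this.div_const α
  rw [intervalIntegral.integral_eq_sub_of_hasDerivAt h
    (((Real.continuous_exp.comp (continuous_const.mul continuous_id)).continuousOn).intervalIntegrable)]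
  simp [sub_div]

/-- Analytic core of the Appendix proposition (case `α ≠ 0`): if the expectation `m`
of the barrier function satisfies the exponential lower bound and is dominated by the
derivative of a bounded, continuously differentiable time-only auxiliary function `w`,
then the candidate lower bound on the reach-avoid probability is nonpositive. -/
theorem appendix_bound_nonpositive_ne_zero
    (T M α β : ℝ) (hT : 0 < T) (hM : 0 ≤ M) (hα : α ≠ 0)
    (m w w' : ℝ → ℝ)
    (hm : ContinuousOn m (Icc 0 T))
    (hmlb : ∀ t ∈ Icc 0 T,
      Real.exp (α * t) * m 0 + (β / α) * (Real.exp (α * t) - 1) ≤ m t)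
    (hw : ∀ t ∈ Icc 0 T, HasDerivAt w (w' t) t)
    (hw' : ContinuousOn w' (Icc 0 T))
    (hwb : ∀ t ∈ Icc 0 T, |w t| ≤ M)
    (hmw : ∀ t ∈ Icc 0 T, m t ≤ w' t) :
    ((m 0 / α + β / α ^ 2) * (Real.exp (α * T) - 1) - (β / α) * T) / T - 2 * M / T
      ≤ 0 := by
  have huIcc : Set.uIcc (0:ℝ) T = Icc 0 T := Set.uIcc_of_le hT.le
  have hmi : IntervalIntegrable m volume 0 T := by
    apply ContinuousOn.intervalIntegrable; rwa [huIcc]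
  have hw'i : IntervalIntegrable w' volume 0 T := by
    apply ContinuousOn.intervalIntegrable; rwa [huIcc]
  have hc1 : Continuous fun t => Real.exp (α * t) :=
    Real.continuous_exp.comp (continuous_const.mul continuous_id)
  have hc2 : Continuous fun t => Real.exp (α * t) * m 0 := hc1.mul continuous_const
  have hc3 : Continuous fun t => (β / α) * (Real.exp (α * t) - 1) :=
    continuous_const.mul (hc1.sub continuous_const)
  have hlbi : IntervalIntegrable
      (fun t => Real.exp (α * t) * m 0 + (β / α) * (Real.exp (α * t) - 1)) volume 0 T :=
    (hc2.add hc3).intervalIntegrable _ _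
  -- upper bound on ∫ m
  have h1 : ∫ t in (0:ℝ)..T, m t ≤ w T - w 0 := by
    rw [← intervalIntegral.integral_eq_sub_of_hasDerivAt (fun t ht => hw t (huIcc ▸ ht)) hw'i]
    exact intervalIntegral.integral_mono_on hT.le hmi hw'i hmw
  have h2 : w T - w 0 ≤ 2 * M := by
    have hT' := hwb T (by constructor <;> linarith)
    have h0 := hwb 0 (by constructor <;> linarith)
    have := abs_le.1 hT'
    have := abs_le.1 h0
    linarith
  -- lower bound on ∫ m
  have h3 : (m 0 / α + β / α ^ 2) * (Real.exp (α * T) - 1) - (β / α) * T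
      ≤ ∫ t in (0:ℝ)..T, m t := by
    have hle := intervalIntegral.integral_mono_on hT.le hlbi hmi hmlb
    have heval : (∫ t in (0:ℝ)..T,
        (Real.exp (α * t) * m 0 + (β / α) * (Real.exp (α * t) - 1)))
        = (m 0 / α + β / α ^ 2) * (Real.exp (α * T) - 1) - (β / α) * T := by
      rw [intervalIntegral.integral_add
          (hc2.intervalIntegrable _ _)
          (hc3.intervalIntegrable _ _),
        intervalIntegral.integral_mul_const, intervalIntegral.integral_const_mul]
      have hsub : (∫ t in (0:ℝ)..T, (Real.exp (α * t) - 1))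
          = (Real.exp (α * T) - 1) / α - T := by
        rw [intervalIntegral.integral_sub
            (hc1.intervalIntegrable _ _)
            (intervalIntegrable_const)]
        simp [exp_mul_integral α T hα]
      rw [exp_mul_integral α T hα, hsub]
      field_simp
      ring
    linarith [heval ▸ hle]
  have hnum : (m 0 / α + β / α ^ 2) * (Real.exp (α * T) - 1) - (β / α) * T ≤ 2 * M := by
    linarith
  rw [sub_nonpos, div_le_div_iff₀ hT hT]
  nlinarith
end

section
/- Let T > 0, M ≥ 0 and β ∈ ℝ. Let m : [0,T] → ℝ be continuous with m(t) ≥ m(0) + β·t for all t ∈ [0,T], and let w : [0,T] → ℝ be continuously differentiable with |w(t)| ≤ M for all t ∈ [0,T] and m(t) ≤ w′(t) for all t ∈ [0,T]. Then m(0) + β·T/2 − 2M/T ≤ 0. -/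
/-!
Since `m 0 + β t ≤ m t ≤ w' t`, the mean value theorem bounds the increment of `w` over `[0, T]`
from below by that of the primitive `m 0 * t + β * t ^ 2 / 2`, i.e. by `m 0 * T + β * T ^ 2 / 2`,
while `|w| ≤ M` bounds the same increment from above by `2 * M`. Dividing by `T` gives the claim.
-/

open Set

theorem sub_le_sub_of_hasDerivAt_le {f g f' g' : ℝ → ℝ} {a b : ℝ} (hab : a ≤ b)
    (hf : ∀ t ∈ Icc a b, HasDerivAt f (f' t) t) (hg : ∀ t ∈ Icc a b, HasDerivAt g (g' t) t)
    (hle : ∀ t ∈ Icc a b, f' t ≤ g' t) : f b - f a ≤ g b - g a := by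
  have hmono : MonotoneOn (fun t ↦ g t - f t) (Icc a b) :=
    monotoneOn_of_hasDerivWithinAt_nonneg (convex_Icc a b)
      (fun t ht ↦ ((hg t ht).sub (hf t ht)).continuousAt.continuousWithinAt)
      (fun t ht ↦ ((hg t (interior_subset ht)).sub (hf t (interior_subset ht))).hasDerivWithinAt)
      (fun t ht ↦ sub_nonneg.2 (hle t (interior_subset ht)))
  have := hmono (left_mem_Icc.2 hab) (right_mem_Icc.2 hab) hab
  linarith

theorem hasDerivAt_linear_add_half_mul_sq (c β t : ℝ) :
    HasDerivAt (fun s ↦ c * s + β * s ^ 2 / 2) (c + β * t) t :=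
  (((hasDerivAt_id' t).const_mul c).add
    (((hasDerivAt_pow 2 t).const_mul β).div_const 2)).congr_deriv (by norm_num; ring)

theorem appendix_bound_nonpositive_zero_general
    (T M β : ℝ) (hT : 0 < T)
    (m w w' : ℝ → ℝ)
    (hmlb : ∀ t ∈ Icc 0 T, m 0 + β * t ≤ m t)
    (hw : ∀ t ∈ Icc 0 T, HasDerivAt w (w' t) t)
    (hwb : ∀ t ∈ Icc 0 T, |w t| ≤ M)
    (hmw : ∀ t ∈ Icc 0 T, m t ≤ w' t) :
    m 0 + β * T / 2 - 2 * M / T ≤ 0 := by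
  have hincr_lower : m 0 * T + β * T ^ 2 / 2 ≤ w T - w 0 := by
    simpa using sub_le_sub_of_hasDerivAt_le hT.le
      (fun t _ ↦ hasDerivAt_linear_add_half_mul_sq (m 0) β t) hw
      (fun t ht ↦ (hmlb t ht).trans (hmw t ht))
  have hincr_upper : w T - w 0 ≤ 2 * M := by
    have hwT := abs_le.1 (hwb T (right_mem_Icc.2 hT.le))
    have hw0 := abs_le.1 (hwb 0 (left_mem_Icc.2 hT.le))
    linarith
  have hrewrite : m 0 + β * T / 2 - 2 * M / T = (m 0 * T + β * T ^ 2 / 2 - 2 * M) / T := by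
    field_simp
  rw [hrewrite]
  exact div_nonpos_of_nonpos_of_nonneg (by linarith) hT.le

/-- Analytic core of the Appendix proposition (case `α = 0`): if the expectation `m`
of the barrier function satisfies the linear lower bound and is dominated by the
derivative of a bounded, continuously differentiable time-only auxiliary function `w`,
then the candidate lower bound on the reach-avoid probability is nonpositive. -/
theorem appendix_bound_nonpositive_zero
    (T M β : ℝ) (hT : 0 < T) (hM : 0 ≤ M)
    (m w w' : ℝ → ℝ)
    (hm : ContinuousOn m (Icc 0 T))
    (hmlb : ∀ t ∈ Icc 0 T, m 0 + β * t ≤ m t)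
    (hw : ∀ t ∈ Icc 0 T, HasDerivAt w (w' t) t)
    (hw' : ContinuousOn w' (Icc 0 T))
    (hwb : ∀ t ∈ Icc 0 T, |w t| ≤ M)
    (hmw : ∀ t ∈ Icc 0 T, m t ≤ w' t) :
    m 0 + β * T / 2 - 2 * M / T ≤ 0 :=
  appendix_bound_nonpositive_zero_general T M β hT m w w' hmlb hw hwb hmw
end

section
/- Let α > 0 and β ∈ ℝ with α + β > 0, and let v₀ ≤ 1. Define F : (0,∞) → ℝ by F(T) = (e^{αT}·(α·v₀ + β) − (α+β)) / ((α+β)·(e^{αT} − 1)). Then F is monotone nondecreasing on (0,∞), and F(T) ≤ 1 for every T > 0. -/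
open Set

/-- The lower bound on the reach-avoid probability produced by Theorem 2 / Corollary 1
(case `α > 0`) is monotone nondecreasing in the horizon `T` and bounded above by one. -/
theorem reach_avoid_lower_bound_monotone_le_one
    (α β v₀ : ℝ) (hα : 0 < α) (hαβ : 0 < α + β) (hv : v₀ ≤ 1) :
    MonotoneOn
        (fun T : ℝ =>
          (Real.exp (α * T) * (α * v₀ + β) - (α + β))
            / ((α + β) * (Real.exp (α * T) - 1)))
        (Ioi (0 : ℝ))
      ∧ ∀ T : ℝ, 0 < T →
        (Real.exp (α * T) * (α * v₀ + β) - (α + β))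
            / ((α + β) * (Real.exp (α * T) - 1)) ≤ 1 := by
  have hP : α * v₀ + β ≤ α + β := by nlinarith
  constructor
  · intro s hs t ht hst
    simp only [mem_Ioi] at hs ht
    have ha : 1 < Real.exp (α * s) := by
      rw [show (1:ℝ) = Real.exp 0 by simp]; apply Real.exp_lt_exp.mpr; positivity
    have hb : 1 < Real.exp (α * t) := by
      rw [show (1:ℝ) = Real.exp 0 by simp]; apply Real.exp_lt_exp.mpr; positivity
    have hab : Real.exp (α * s) ≤ Real.exp (α * t) := by
      apply Real.exp_le_exp.mpr; nlinarith
    set a := Real.exp (α * s)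
    set b := Real.exp (α * t)
    have hda : 0 < (α + β) * (a - 1) := by nlinarith
    have hdb : 0 < (α + β) * (b - 1) := by nlinarith
    rw [div_le_div_iff₀ hda hdb]
    nlinarith [mul_nonneg (sub_nonneg.mpr hab) (sub_nonneg.mpr hP)]
  · intro T hT
    have he : 1 < Real.exp (α * T) := by
      rw [show (1:ℝ) = Real.exp 0 by simp]; apply Real.exp_lt_exp.mpr; positivity
    have hd : 0 < (α + β) * (Real.exp (α * T) - 1) := by nlinarith
    rw [div_le_one hd]
    nlinarith
end
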